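/- arXiv:2211.00164 — 8 statements merged into one kernel-verified Lean document; each statement's English description precedes it below -/
import Mathlib

section
/- For every exo-free policy π : S → PMF A, every k ≥ 1, every latent state (s,e) ∈ S × E, every action a ∈ A, and every (s',e') ∈ S × E, the k-step joint kernel factorizes as a product of the controller and exogenous k-step kernels: Pz^k((s,e),a)((s',e')) = Ps^k(s,a)(s') * Te^k(e)(e'). -/
open scoped ENNReal BigOperators

/-- The `k`-step controller kernel (index `k : ℕ` represents `k+1` steps):
`Psk Ts π 0 = Ts` (one step) and
`Psk Ts π (k+1) s a = (Ts s a).bind (fun s1 => (π s1).bind (fun a1 => Psk Ts π k s1 a1))`. -/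
noncomputable def Psk {S A : Type*} (Ts : S → A → PMF S) (π : S → PMF A) :
    ℕ → S → A → PMF S
  | 0 => Ts
  | k + 1 => fun s a => (Ts s a).bind fun s1 => (π s1).bind fun a1 => Psk Ts π k s1 a1

/-- The `k`-step exogenous kernel (index `k : ℕ` represents `k+1` steps). -/
noncomputable def Tek {E : Type*} (Te : E → PMF E) : ℕ → E → PMF E
  | 0 => Te
  | k + 1 => fun e => (Te e).bind (Tek Te k)

/-- The `k`-step joint kernel (index `k : ℕ` represents `k+1` steps). -/
noncomputable def Pzk {S E A : Type*} (T : S × E → A → PMF (S × E)) (π : S → PMF A) :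
    ℕ → S × E → A → PMF (S × E)
  | 0 => T
  | k + 1 => fun z a => (T z a).bind fun z1 => (π z1.1).bind fun a1 => Pzk T π k z1 a1

/-!
Product distributions are preserved by binding against a product of kernels. Since the policy
reads only the controller coordinate, averaging over actions leaves the exogenous factor
untouched, so by induction on `k` every step of the joint chain stays a product.
-/

namespace PMF

variable {α β γ δ ι : Type*}

def IsProd (p : PMF (α × β)) (q : PMF α) (r : PMF β) : Prop :=
  ∀ x y, p (x, y) = q x * r y

theorem IsProd.bind {p : PMF (α × β)} {q : PMF α} {r : PMF β} (hp : p.IsProd q r)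
    {f : α × β → PMF (γ × δ)} {g : α → PMF γ} {h : β → PMF δ}
    (hf : ∀ x y, (f (x, y)).IsProd (g x) (h y)) :
    (p.bind f).IsProd (q.bind g) (r.bind h) := by
  intro c d
  calc p.bind f (c, d) = ∑' (x) (y), (q x * g x c) * (r y * h y d) := by
        rw [bind_apply, ENNReal.tsum_prod']
        refine tsum_congr fun x => tsum_congr fun y => ?_
        rw [hp, hf]
        ring
    _ = q.bind g c * r.bind h d := by
        simp only [ENNReal.tsum_mul_left, ENNReal.tsum_mul_right, bind_apply]

theorem IsProd.bind_of_const_right {q : PMF ι} {f : ι → PMF (γ × δ)} {g : ι → PMF γ}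
    {r : PMF δ} (hf : ∀ i, (f i).IsProd (g i) r) :
    (q.bind f).IsProd (q.bind g) r := by
  intro c d
  calc q.bind f (c, d) = ∑' i, q i * g i c * r d :=
        tsum_congr fun i => by rw [hf i c d, mul_assoc]
    _ = q.bind g c * r d := ENNReal.tsum_mul_right

end PMF

theorem multi_step_joint_kernel_factorizes_general
    {S E A : Type*}
    (Ts : S → A → PMF S) (Te : E → PMF E)
    (T : S × E → A → PMF (S × E))
    (hT : ∀ (s : S) (e : E) (a : A) (s' : S) (e' : E),
      T (s, e) a (s', e') = Ts s a s' * Te e e')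
    (π : S → PMF A) (k : ℕ) (s : S) (e : E) (a : A) (s' : S) (e' : E) :
    Pzk T π k (s, e) a (s', e') = Psk Ts π k s a s' * Tek Te k e e' := by
  suffices h : ∀ s e a, (Pzk T π k (s, e) a).IsProd (Psk Ts π k s a) (Tek Te k e) from
    h s e a s' e'
  induction k with
  | zero => exact hT
  | succ k ih =>
    exact fun s e a => PMF.IsProd.bind (hT s e a) fun s1 e1 =>
      PMF.IsProd.bind_of_const_right fun a1 => ih s1 e1 a1

/-- For every exo-free policy `π`, every `k ≥ 1` (here `k+1` with `k : ℕ`), every latent state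
`(s, e)`, action `a`, and `(s', e')`, the `k`-step joint kernel factorizes as the product of
the controller and exogenous `k`-step kernels. -/
theorem multi_step_joint_kernel_factorizes
    {S E A : Type*} [Fintype S] [Fintype E] [Fintype A]
    [Nonempty S] [Nonempty E] [Nonempty A]
    (Ts : S → A → PMF S) (Te : E → PMF E)
    (T : S × E → A → PMF (S × E))
    (hT : ∀ (s : S) (e : E) (a : A) (s' : S) (e' : E),
      T (s, e) a (s', e') = Ts s a s' * Te e e')
    (π : S → PMF A) (k : ℕ) (s : S) (e : E) (a : A) (s' : S) (e' : E) :
    Pzk T π k (s, e) a (s', e') = Psk Ts π k s a s' * Tek Te k e e' :=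
  multi_step_joint_kernel_factorizes_general Ts Te T hT π k s e a s' e'
end

section
/- For every exo-free policy π : S → PMF A, every k ≥ 1, every latent state (s,e) ∈ S × E and every action a ∈ A: the E-marginal of Pz^k((s,e),a) equals Te^k(e) (the exogenous chain evolves autonomously, independently of the controller state and the action), and the S-marginal of Pz^k((s,e),a) equals Ps^k(s,a) (the controller chain does not depend on the exogenous state). -/
open scoped ENNReal BigOperators

/-! Under a factorized one-step kernel, the mass function of the joint `k`-step kernel is the
product of those of the controller and exogenous `k`-step kernels: in the induction step the sum
over the intermediate state `(s₁, e₁)` splits into a sum over `s₁` times a sum over `e₁`, because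
the policy's action depends on `s₁` alone. A product mass function has its factors as marginals. -/

namespace PMF

variable {α β γ δ : Type*}

theorem map_fst_eq_of_apply_eq_mul {p : PMF (α × β)} {q : PMF α} {r : PMF β}
    (h : ∀ x y, p (x, y) = q x * r y) : p.map Prod.fst = q := by
  ext x
  rw [map_apply, ENNReal.tsum_prod', ENNReal.tsum_comm]
  simp [h, ENNReal.tsum_mul_left]

theorem map_snd_eq_of_apply_eq_mul {p : PMF (α × β)} {q : PMF α} {r : PMF β}
    (h : ∀ x y, p (x, y) = q x * r y) : p.map Prod.snd = r := by
  ext y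
  simp [map_apply, ENNReal.tsum_prod', h, ENNReal.tsum_mul_right]

theorem bind_apply_eq_mul_of_apply_eq_mul_const {μ : PMF γ} {f : γ → PMF (α × β)}
    {g : γ → PMF α} {r : PMF β} (hf : ∀ c x y, f c (x, y) = g c x * r y) (x : α) (y : β) :
    μ.bind f (x, y) = μ.bind g x * r y := by
  simp only [bind_apply, hf, ← mul_assoc, ENNReal.tsum_mul_right]

theorem bind_apply_eq_bind_mul_bind {p : PMF (γ × δ)} {q : PMF γ} {r : PMF δ}
    (hp : ∀ c d, p (c, d) = q c * r d) {f : γ × δ → PMF (α × β)} {g : γ → PMF α}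
    {h : δ → PMF β} (hf : ∀ c d x y, f (c, d) (x, y) = g c x * h d y) (x : α) (y : β) :
    p.bind f (x, y) = q.bind g x * r.bind h y := by
  simp only [bind_apply, ENNReal.tsum_prod', hp, hf, mul_mul_mul_comm, ENNReal.tsum_mul_left,
    ENNReal.tsum_mul_right]

end PMF

theorem Pzk_apply_eq_mul {S E A : Type*} (Ts : S → A → PMF S) (Te : E → PMF E)
    (T : S × E → A → PMF (S × E))
    (hT : ∀ s e a s' e', T (s, e) a (s', e') = Ts s a s' * Te e e') (π : S → PMF A) (k : ℕ)
    (s : S) (e : E) (a : A) (s' : S) (e' : E) :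
    Pzk T π k (s, e) a (s', e') = Psk Ts π k s a s' * Tek Te k e e' := by
  induction k generalizing s e a s' e' with
  | zero => exact hT s e a s' e'
  | succ k ih =>
    exact PMF.bind_apply_eq_bind_mul_bind (hT s e a)
      (fun s₁ e₁ => PMF.bind_apply_eq_mul_of_apply_eq_mul_const (ih s₁ e₁)) s' e'

theorem multi_step_joint_kernel_marginals_general
    {S E A : Type*}
    (Ts : S → A → PMF S) (Te : E → PMF E)
    (T : S × E → A → PMF (S × E))
    (hT : ∀ (s : S) (e : E) (a : A) (s' : S) (e' : E),
      T (s, e) a (s', e') = Ts s a s' * Te e e')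
    (π : S → PMF A) (k : ℕ) (s : S) (e : E) (a : A) :
    (Pzk T π k (s, e) a).map Prod.snd = Tek Te k e ∧
    (Pzk T π k (s, e) a).map Prod.fst = Psk Ts π k s a :=
  have hk := Pzk_apply_eq_mul Ts Te T hT π k s e a
  ⟨PMF.map_snd_eq_of_apply_eq_mul hk, PMF.map_fst_eq_of_apply_eq_mul hk⟩

/-- For every exo-free policy `π`, every `k ≥ 1` (here `k+1` with `k : ℕ`), every latent state
`(s, e)` and action `a`: the `E`-marginal of the `k`-step joint kernel equals the `k`-step
exogenous kernel `Tek Te k e` (the exogenous chain evolves autonomously, independent of the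
controller state and the action), and the `S`-marginal equals the `k`-step controller kernel
`Psk Ts π k s a` (the controller chain does not depend on the exogenous state). -/
theorem multi_step_joint_kernel_marginals
    {S E A : Type*} [Fintype S] [Fintype E] [Fintype A]
    [Nonempty S] [Nonempty E] [Nonempty A]
    (Ts : S → A → PMF S) (Te : E → PMF E)
    (T : S × E → A → PMF (S × E))
    (hT : ∀ (s : S) (e : E) (a : A) (s' : S) (e' : E),
      T (s, e) a (s', e') = Ts s a s' * Te e e')
    (π : S → PMF A) (k : ℕ) (s : S) (e : E) (a : A) :
    (Pzk T π k (s, e) a).map Prod.snd = Tek Te k e ∧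
    (Pzk T π k (s, e) a).map Prod.fst = Psk Ts π k s a :=
  multi_step_joint_kernel_marginals_general Ts Te T hT π k s e a
end

section
/- Invariance of the multi-step inverse model at the latent level: for every exo-free policy π : S → PMF A, every k ≥ 1, every (s,e) ∈ S × E, every a ∈ A and every (s',e') ∈ S × E, if Σ_{a''∈A} π(s)(a'') * Pz^k((s,e),a'')((s',e')) > 0, then [π(s)(a) * Pz^k((s,e),a)((s',e'))] / [Σ_{a''∈A} π(s)(a'') * Pz^k((s,e),a'')((s',e'))] = [π(s)(a) * Ps^k(s,a)(s')] / [Σ_{a''∈A} π(s)(a'') * Ps^k(s,a'')(s')]; in particular, the conditional probability of the first action given the latent states at times t and t+k depends only on their controller components (s, s') and not on the exogenous components (e, e'). -/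
open scoped ENNReal BigOperators

theorem Pzk_apply_eq_Psk_mul_Tek {S E A : Type*}
    {Ts : S → A → PMF S} {Te : E → PMF E} {T : S × E → A → PMF (S × E)}
    (hT : ∀ s e a s' e', T (s, e) a (s', e') = Ts s a s' * Te e e') (π : S → PMF A) (k : ℕ) :
    ∀ s e a s' e', Pzk T π k (s, e) a (s', e') = Psk Ts π k s a s' * Tek Te k e e' := by
  induction k with
  | zero => exact hT
  | succ k ih =>
    intro s e a s' e'
    calc Pzk T π (k + 1) (s, e) a (s', e')
        = ∑' s1, ∑' e1, (Ts s a s1 * Te e e1) *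
            ∑' a1, π s1 a1 * (Psk Ts π k s1 a1 s' * Tek Te k e1 e') := by
          simp only [Pzk, PMF.bind_apply, ENNReal.tsum_prod', hT, ih]
      _ = ∑' s1, ∑' e1, (Ts s a s1 * ∑' a1, π s1 a1 * Psk Ts π k s1 a1 s') *
            (Te e e1 * Tek Te k e1 e') := by
          refine tsum_congr fun s1 => tsum_congr fun e1 => ?_
          simp only [← mul_assoc, ENNReal.tsum_mul_right]
          ring
      _ = Psk Ts π (k + 1) s a s' * Tek Te (k + 1) e e' := by
          simp only [Psk, Tek, PMF.bind_apply, ENNReal.tsum_mul_left, ENNReal.tsum_mul_right]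

theorem sum_mul_Pzk_eq_sum_mul_Psk_mul_Tek {S E A : Type*} [Fintype A]
    {Ts : S → A → PMF S} {Te : E → PMF E} {T : S × E → A → PMF (S × E)}
    (hT : ∀ s e a s' e', T (s, e) a (s', e') = Ts s a s' * Te e e') (π : S → PMF A) (k : ℕ)
    (s : S) (e : E) (s' : S) (e' : E) :
    ∑ a, π s a * Pzk T π k (s, e) a (s', e') =
      (∑ a, π s a * Psk Ts π k s a s') * Tek Te k e e' := by
  simp only [Pzk_apply_eq_Psk_mul_Tek hT, Finset.sum_mul, mul_assoc]

theorem multi_step_inverse_model_latent_invariance_general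
    {S E A : Type*} [Fintype A]
    (Ts : S → A → PMF S) (Te : E → PMF E)
    (T : S × E → A → PMF (S × E))
    (hT : ∀ (s : S) (e : E) (a : A) (s' : S) (e' : E),
      T (s, e) a (s', e') = Ts s a s' * Te e e')
    (π : S → PMF A) (k : ℕ) (s : S) (e : E) (a : A) (s' : S) (e' : E)
    (hpos : 0 < ∑ a'' : A, π s a'' * Pzk T π k (s, e) a'' (s', e')) :
    (π s a * Pzk T π k (s, e) a (s', e')) /
        (∑ a'' : A, π s a'' * Pzk T π k (s, e) a'' (s', e')) =
      (π s a * Psk Ts π k s a s') /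
        (∑ a'' : A, π s a'' * Psk Ts π k s a'' s') := by
  rw [sum_mul_Pzk_eq_sum_mul_Psk_mul_Tek hT] at hpos ⊢
  rw [Pzk_apply_eq_Psk_mul_Tek hT, ← mul_assoc]
  exact ENNReal.mul_div_mul_right _ _ (right_ne_zero_of_mul hpos.ne') (PMF.apply_ne_top _ _)

/-- Invariance of the multi-step inverse model at the latent level: the conditional probability
of the first action given the latent states at times `t` and `t+k` depends only on the
controller components `(s, s')` and not on the exogenous components `(e, e')`. -/
theorem multi_step_inverse_model_latent_invariance
    {S E A : Type*} [Fintype S] [Fintype E] [Fintype A]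
    [Nonempty S] [Nonempty E] [Nonempty A]
    (Ts : S → A → PMF S) (Te : E → PMF E)
    (T : S × E → A → PMF (S × E))
    (hT : ∀ (s : S) (e : E) (a : A) (s' : S) (e' : E),
      T (s, e) a (s', e') = Ts s a s' * Te e e')
    (π : S → PMF A) (k : ℕ) (s : S) (e : E) (a : A) (s' : S) (e' : E)
    (hpos : 0 < ∑ a'' : A, π s a'' * Pzk T π k (s, e) a'' (s', e')) :
    (π s a * Pzk T π k (s, e) a (s', e')) /
        (∑ a'' : A, π s a'' * Pzk T π k (s, e) a'' (s', e')) =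
      (π s a * Psk Ts π k s a s') /
        (∑ a'' : A, π s a'' * Psk Ts π k s a'' s') :=
  multi_step_inverse_model_latent_invariance_general Ts Te T hT π k s e a s' e' hpos
end

section
/- Equivalence of the multi-step inverse model and behavior cloning under a fixed deterministic exo-free policy: suppose the exo-free policy is deterministic, i.e. π(s) = PMF.pure(â(s)) for some function â : S → A. Then for every initial distribution μ0 : PMF Z, every k ≥ 1, all observations x, x' ∈ X and every action a ∈ A with Σ_{a''∈A} μ^k(x, a'', x') > 0, one has μ^k(x, a, x') / Σ_{a''∈A} μ^k(x, a'', x') = 1 if a = â(φ⋆(x)) and = 0 otherwise. Consequently the multi-step inverse conditional P(a_t = a | x_t = x, x_{t+k} = x') coincides with the behavior-cloning conditional P(a_t = a | x_t = x), which also equals the indicator of a = â(φ⋆(x)). -/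
open scoped ENNReal BigOperators

/-- The joint PMF `μ^k` on `X × A × X` of the triple `(x_t, a_t, x_{t+k})`:
sample `z ~ μ0`, `x ~ q z`, `a ~ π (φ⋆ x)`, `z' ~ Pzk T π k z a`, `x' ~ q z'`. -/
noncomputable def muk {S E A X : Type*} (T : S × E → A → PMF (S × E)) (π : S → PMF A)
    (q : S × E → PMF X) (ψ : X → S × E) (μ0 : PMF (S × E)) (k : ℕ) :
    PMF (X × A × X) :=
  μ0.bind fun z => (q z).bind fun x => (π (ψ x).1).bind fun a =>
    (Pzk T π k z a).bind fun z' => (q z').map fun x' => (x, a, x')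

/-!
A deterministic policy makes the action a function of the current observation: every triple
`(x, a, x')` charged by `μ^k` has `a = â (φ⋆ x)`. Conditioning on `x_t = x`, with or without
also conditioning on `x_{t+k}`, therefore leaves all the mass on the single action `â (φ⋆ x)`.
-/

open Finset

theorem ENNReal.div_sum_eq_ite_of_eq_zero_of_ne {ι : Type*} [Fintype ι] [DecidableEq ι]
    {f : ι → ℝ≥0∞} {b : ι} (hf : ∀ i, i ≠ b → f i = 0) (hb : f b ≠ ∞)
    (hsum : ∑ j, f j ≠ 0) (i : ι) :
    f i / ∑ j, f j = if i = b then 1 else 0 := by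
  have hsum_eq : ∑ j, f j = f b := sum_eq_single b (fun j _ hj => hf j hj) (by simp)
  rw [hsum_eq] at hsum ⊢
  split_ifs with hi
  · rw [hi, ENNReal.div_self hsum hb]
  · rw [hf i hi, ENNReal.zero_div]

theorem action_mem_support_of_mem_support_muk {S E A X : Type*}
    {T : S × E → A → PMF (S × E)} {π : S → PMF A} {q : S × E → PMF X} {ψ : X → S × E}
    {μ0 : PMF (S × E)} {k : ℕ} {x x' : X} {a : A}
    (h : (x, a, x') ∈ (muk T π q ψ μ0 k).support) : a ∈ (π (ψ x).1).support := by
  simp only [muk, PMF.mem_support_bind_iff, PMF.support_map, Set.mem_image] at h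
  obtain ⟨_, _, x0, _, a0, ha0, _, _, _, _, hxax⟩ := h
  simp only [Prod.mk.injEq] at hxax
  obtain ⟨rfl, rfl, -⟩ := hxax
  exact ha0

theorem muk_apply_eq_zero_of_deterministic {S E A X : Type*}
    {T : S × E → A → PMF (S × E)} {π : S → PMF A} {ahat : S → A}
    (hdet : ∀ s : S, π s = PMF.pure (ahat s)) (q : S × E → PMF X) (ψ : X → S × E)
    (μ0 : PMF (S × E)) (k : ℕ) {x : X} (x' : X) {a : A} (ha : a ≠ ahat (ψ x).1) :
    muk T π q ψ μ0 k (x, a, x') = 0 := by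
  rw [PMF.apply_eq_zero_iff]
  intro hmem
  have hmem_pure := action_mem_support_of_mem_support_muk hmem
  rw [hdet, PMF.mem_support_pure_iff] at hmem_pure
  exact ha hmem_pure

theorem multi_step_inverse_eq_behavior_cloning_of_deterministic_policy_general
    {S E A X : Type*} [Fintype A] [Fintype X]
    [DecidableEq A]
    (T : S × E → A → PMF (S × E))
    (π : S → PMF A) (ahat : S → A)
    (hdet : ∀ s : S, π s = PMF.pure (ahat s))
    (q : S × E → PMF X)
    (ψ : X → S × E)
    (μ0 : PMF (S × E)) (k : ℕ) (x x' : X) (a : A)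
    (hpos : 0 < ∑ a'' : A, muk T π q ψ μ0 k (x, a'', x')) :
    (muk T π q ψ μ0 k (x, a, x')) / (∑ a'' : A, muk T π q ψ μ0 k (x, a'', x')) =
        (if a = ahat (ψ x).1 then 1 else 0) ∧
    (∑ x'' : X, muk T π q ψ μ0 k (x, a, x'')) /
        (∑ a'' : A, ∑ x'' : X, muk T π q ψ μ0 k (x, a'', x'')) =
        (if a = ahat (ψ x).1 then 1 else 0) := by
  set μ := muk T π q ψ μ0 k
  have hzero : ∀ x'' a'', a'' ≠ ahat (ψ x).1 → μ (x, a'', x'') = 0 :=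
    fun x'' _ ha => muk_apply_eq_zero_of_deterministic hdet q ψ μ0 k x'' ha
  refine ⟨ENNReal.div_sum_eq_ite_of_eq_zero_of_ne (hzero x') (PMF.apply_ne_top _ _)
    hpos.ne' a, ENNReal.div_sum_eq_ite_of_eq_zero_of_ne
      (f := fun a'' => ∑ x'', μ (x, a'', x'')) ?_ ?_ ?_ a⟩
  · exact fun a'' ha => sum_eq_zero fun x'' _ => hzero x'' a'' ha
  · exact ENNReal.sum_ne_top.2 fun _ _ => PMF.apply_ne_top _ _
  · refine fun hsum => hpos.ne' (sum_eq_zero fun a'' _ => ?_)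
    exact sum_eq_zero_iff.1 (sum_eq_zero_iff.1 hsum a'' (mem_univ _)) x' (mem_univ _)

/-- Under a fixed deterministic exo-free policy `π s = PMF.pure (â s)`, the multi-step inverse
conditional `P(a_t = a | x_t = x, x_{t+k} = x')` equals the indicator of `a = â (φ⋆ x)`, and it
coincides with the behavior-cloning conditional `P(a_t = a | x_t = x)`, which also equals the
same indicator (here `φ⋆ x = (ψ x).1`). -/
theorem multi_step_inverse_eq_behavior_cloning_of_deterministic_policy
    {S E A X : Type*} [Fintype S] [Fintype E] [Fintype A] [Fintype X]
    [Nonempty S] [Nonempty E] [Nonempty A] [Nonempty X] [DecidableEq A]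
    (Ts : S → A → PMF S) (Te : E → PMF E)
    (T : S × E → A → PMF (S × E))
    (hT : ∀ (s : S) (e : E) (a : A) (s' : S) (e' : E),
      T (s, e) a (s', e') = Ts s a s' * Te e e')
    (π : S → PMF A) (ahat : S → A)
    (hdet : ∀ s : S, π s = PMF.pure (ahat s))
    (q : S × E → PMF X)
    (hq : ∀ z z' : S × E, z ≠ z' → Disjoint (q z).support (q z').support)
    (ψ : X → S × E)
    (hψ : ∀ (z : S × E) (x : X), x ∈ (q z).support → ψ x = z)
    (μ0 : PMF (S × E)) (k : ℕ) (x x' : X) (a : A)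
    (hpos : 0 < ∑ a'' : A, muk T π q ψ μ0 k (x, a'', x')) :
    (muk T π q ψ μ0 k (x, a, x')) / (∑ a'' : A, muk T π q ψ μ0 k (x, a'', x')) =
        (if a = ahat (ψ x).1 then 1 else 0) ∧
    (∑ x'' : X, muk T π q ψ μ0 k (x, a, x'')) /
        (∑ a'' : A, ∑ x'' : X, muk T π q ψ μ0 k (x, a'', x'')) =
        (if a = ahat (ψ x).1 then 1 else 0) :=
  multi_step_inverse_eq_behavior_cloning_of_deterministic_policy_general T π ahat hdet q ψ μ0 k x x'
    a hpos
end

section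
/- The agent-controller representation is Bellman complete: if f : Z × A → ℝ satisfies f((s,e),a) = Q(s,a) for some Q : S × A → ℝ and all s ∈ S, e ∈ E, a ∈ A, then there exists Q' : S × A → ℝ such that (𝒯f)((s,e),a) = Q'(s,a) for all s ∈ S, e ∈ E, a ∈ A; that is, the class of Q-functions on Z × A that depend only on the controller component of the latent state is closed under the Bellman operator 𝒯. -/
/-!
Neither the reward nor the maximum over next actions of a controller-only Q-function depends on
the exogenous state, and the exogenous factor `Te e` of the transition kernel sums to one, so
summing it out turns the Bellman backup into that of the controller MDP `(Ts, R)` alone.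
-/

open scoped ENNReal BigOperators

/-- The Bellman operator on Q-functions over `Z × A` with `Z = S × E`:
`(𝒯 f)(z, a) = R (z.1, a) + ∑ z', (T z a z').toReal * max_{a'} f (z', a')`. -/
noncomputable def bellman {S E A : Type*} [Fintype S] [Fintype E] [Fintype A] [Nonempty A]
    (T : S × E → A → PMF (S × E)) (R : S × A → ℝ)
    (f : (S × E) × A → ℝ) : (S × E) × A → ℝ :=
  fun za => R (za.1.1, za.2) +
    ∑ z' : S × E, (T za.1 za.2 z').toReal *
      (Finset.univ.sup' Finset.univ_nonempty fun a' : A => f (z', a'))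

theorem PMF.sum_toReal_eq_one {α : Type*} [Fintype α] (p : PMF α) :
    ∑ a, (p a).toReal = 1 := by
  rw [← ENNReal.toReal_sum fun a _ => p.apply_ne_top a,
    ← tsum_fintype (L := SummationFilter.unconditional α), p.tsum_coe, ENNReal.toReal_one]

theorem sum_toReal_mul_fst_of_eq_mul {α β : Type*} [Fintype α] [Fintype β]
    (w : α × β → ℝ≥0∞) (p : α → ℝ≥0∞) (q : PMF β) (hw : ∀ x y, w (x, y) = p x * q y)
    (g : α → ℝ) :
    ∑ xy : α × β, (w xy).toReal * g xy.1 = ∑ x, (p x).toReal * g x := by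
  rw [Fintype.sum_prod_type]
  refine Finset.sum_congr rfl fun x _ => ?_
  simp only [hw, ENNReal.toReal_mul]
  rw [← Finset.sum_mul, ← Finset.mul_sum, q.sum_toReal_eq_one, mul_one]

noncomputable def controllerBellman {S A : Type*} [Fintype S] [Fintype A] [Nonempty A]
    (Ts : S → A → PMF S) (R : S × A → ℝ) (Q : S × A → ℝ) : S × A → ℝ :=
  fun sa => R sa + ∑ s' : S, (Ts sa.1 sa.2 s').toReal *
    (Finset.univ.sup' Finset.univ_nonempty fun a' : A => Q (s', a'))

theorem bellman_apply_eq_controllerBellman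
    {S E A : Type*} [Fintype S] [Fintype E] [Fintype A] [Nonempty A]
    (Ts : S → A → PMF S) (Te : E → PMF E) (T : S × E → A → PMF (S × E))
    (hT : ∀ s e a s' e', T (s, e) a (s', e') = Ts s a s' * Te e e')
    (R : S × A → ℝ) (f : (S × E) × A → ℝ) (Q : S × A → ℝ)
    (hf : ∀ s e a, f ((s, e), a) = Q (s, a)) (s : S) (e : E) (a : A) :
    bellman T R f ((s, e), a) = controllerBellman Ts R Q (s, a) := by
  have hmax : ∀ z' : S × E,
      (Finset.univ.sup' Finset.univ_nonempty fun a' => f (z', a')) =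
        Finset.univ.sup' Finset.univ_nonempty fun a' => Q (z'.1, a') := fun ⟨s', e'⟩ => by
    simp only [hf]
  simp only [bellman, controllerBellman, hmax]
  exact congrArg _ (sum_toReal_mul_fst_of_eq_mul _ _ (Te e) (hT s e a)
    fun s' => Finset.univ.sup' Finset.univ_nonempty fun a' => Q (s', a'))

theorem acro_representation_bellman_complete_general
    {S E A : Type*} [Fintype S] [Fintype E] [Fintype A]
    [Nonempty A]
    (Ts : S → A → PMF S) (Te : E → PMF E)
    (T : S × E → A → PMF (S × E))
    (hT : ∀ (s : S) (e : E) (a : A) (s' : S) (e' : E),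
      T (s, e) a (s', e') = Ts s a s' * Te e e')
    (R : S × A → ℝ)
    (f : (S × E) × A → ℝ) (Q : S × A → ℝ)
    (hf : ∀ (s : S) (e : E) (a : A), f ((s, e), a) = Q (s, a)) :
    ∃ Q' : S × A → ℝ, ∀ (s : S) (e : E) (a : A),
      bellman T R f ((s, e), a) = Q' (s, a) :=
  ⟨controllerBellman Ts R Q, bellman_apply_eq_controllerBellman Ts Te T hT R f Q hf⟩

/-- The agent-controller representation is Bellman complete: the class of Q-functions on
`Z × A` that depend only on the controller component of the latent state is closed under the
Bellman operator. -/
theorem acro_representation_bellman_complete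
    {S E A : Type*} [Fintype S] [Fintype E] [Fintype A]
    [Nonempty S] [Nonempty E] [Nonempty A]
    (Ts : S → A → PMF S) (Te : E → PMF E)
    (T : S × E → A → PMF (S × E))
    (hT : ∀ (s : S) (e : E) (a : A) (s' : S) (e' : E),
      T (s, e) a (s', e') = Ts s a s' * Te e e')
    (R : S × A → ℝ)
    (f : (S × E) × A → ℝ) (Q : S × A → ℝ)
    (hf : ∀ (s : S) (e : E) (a : A), f ((s, e), a) = Q (s, a)) :
    ∃ Q' : S × A → ℝ, ∀ (s : S) (e : E) (a : A),
      bellman T R f ((s, e), a) = Q' (s, a) :=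
  acro_representation_bellman_complete_general Ts Te T hT R f Q hf
end

section
/- Exogenous information may violate Bellman completeness: there exists a first-coordinate-measurable function f : X → ℝ (namely f(b1,b2) = if b1 then 1 else 0) such that its Bellman backup 𝒯f = f ∘ step is not first-coordinate-measurable (indeed (𝒯f)(b1,b2) = if xor b1 b2 then 1 else 0, and (𝒯f)(true,true) ≠ (𝒯f)(true,false)). Hence the class of first-coordinate-measurable functions, i.e. the Q-function class built on the representation φ(b1,b2) = b1, is not closed under the Bellman operator, even though this representation refines the trivial agent-controller representation of this action-free, fully exogenous system. -/
/-- The deterministic single-action transition on `Bool × Bool`: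
`step (b1, b2) = (xor b1 b2, b2)`. -/
def step : Bool × Bool → Bool × Bool :=
  fun p => (xor p.1 p.2, p.2)

/-- A function `f : Bool × Bool → ℝ` is first-coordinate-measurable if it does not depend on
the second coordinate. -/
def FirstCoordMeasurable (f : Bool × Bool → ℝ) : Prop :=
  ∀ b1 b2 b2' : Bool, f (b1, b2) = f (b1, b2')

/-! The indicator of the first coordinate only sees `b1`, but after one step it sees
`xor b1 b2`, which depends on the exogenous bit `b2`. -/

theorem firstCoordMeasurable_comp_fst (g : Bool → ℝ) : FirstCoordMeasurable (g ∘ Prod.fst) :=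
  fun _ _ _ => rfl

theorem not_firstCoordMeasurable_of_ne {f : Bool × Bool → ℝ} {b1 b2 b2' : Bool}
    (h : f (b1, b2) ≠ f (b1, b2')) : ¬ FirstCoordMeasurable f :=
  fun hf => h (hf b1 b2 b2')

theorem comp_fst_comp_step (g : Bool → ℝ) (b1 b2 : Bool) :
    (g ∘ Prod.fst ∘ step) (b1, b2) = g (xor b1 b2) :=
  rfl

def firstCoordIndicator (b : Bool) : ℝ := if b then 1 else 0

theorem firstCoordIndicator_true_ne_false :
    firstCoordIndicator true ≠ firstCoordIndicator false := by
  simp [firstCoordIndicator]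

/-- Exogenous information may violate Bellman completeness: there exists a
first-coordinate-measurable `f : Bool × Bool → ℝ` (namely `f (b1, b2) = if b1 then 1 else 0`)
whose Bellman backup `𝒯 f = f ∘ step` (the reward is identically `0` and there is a single
action) is not first-coordinate-measurable; indeed `(𝒯 f)(b1, b2) = if xor b1 b2 then 1 else 0`
and `(𝒯 f)(true, true) ≠ (𝒯 f)(true, false)`. Hence the class of first-coordinate-measurable
functions is not closed under the Bellman operator. -/
theorem exogenous_info_may_violate_bellman_completeness :
    ∃ f : Bool × Bool → ℝ,
      (∀ b1 b2 : Bool, f (b1, b2) = if b1 then 1 else 0) ∧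
      FirstCoordMeasurable f ∧
      ¬ FirstCoordMeasurable (f ∘ step) ∧
      (∀ b1 b2 : Bool, (f ∘ step) (b1, b2) = if xor b1 b2 then 1 else 0) ∧
      (f ∘ step) (true, true) ≠ (f ∘ step) (true, false) := by
  have hne : (firstCoordIndicator ∘ Prod.fst ∘ step) (true, true) ≠
      (firstCoordIndicator ∘ Prod.fst ∘ step) (true, false) := by
    rw [comp_fst_comp_step, comp_fst_comp_step]
    exact firstCoordIndicator_true_ne_false.symm
  exact ⟨firstCoordIndicator ∘ Prod.fst, fun _ _ => rfl, firstCoordMeasurable_comp_fst _,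
    not_firstCoordMeasurable_of_ne hne, comp_fst_comp_step _, hne⟩
end

section
/- A one-step inverse model built on the collapsing representation achieves zero loss: there exists a function g : X × X → A such that for every non-terminal state s ∈ {s0, s1, s2, s3} and every action a ∈ A, g(φ(s), φ(δ(s,a))) = a; that is, the action taken is perfectly determined by the pair of representations of the current and next states, even though φ identifies s0 with s2 and s1 with s3. -/
/-- The states of the counterexample MDP (`sf` is terminal). -/
inductive St : Type
  | s0 | s1 | s2 | s3 | sf
  deriving DecidableEq

/-- The actions of the counterexample MDP. -/
inductive Ac : Type
  | a0 | a1 | a2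
  deriving DecidableEq

open St Ac

/-- The deterministic transition function: `a0` stays put on non-terminal states, `a1` cycles
`s0 → s1 → s2 → s3 → s0`, `a2` terminates, and `sf` is absorbing. -/
def tr : St → Ac → St
  | sf, _ => sf
  | _, a2 => sf
  | s, a0 => s
  | s0, a1 => s1
  | s1, a1 => s2
  | s2, a1 => s3
  | s3, a1 => s0

/-- The reward function: `1` for taking `a2` in `s2`, and `0` otherwise. -/
def rew : St → Ac → ℝ
  | s2, a2 => 1
  | _, _ => 0

/-- The representation space. -/
inductive Ob : Type
  | x0 | x1 | xf
  deriving DecidableEq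

open Ob

/-- The collapsing representation: `φ s0 = φ s2 = x0`, `φ s1 = φ s3 = x1`, `φ sf = xf`. -/
def phi : St → Ob
  | s0 => x0
  | s2 => x0
  | s1 => x1
  | s3 => x1
  | sf => xf

/- The decoder reads `a2` off a terminal next representation, and otherwise `a0` or `a1` according
to whether the representation stayed put. This works because `φ` only identifies states two steps
apart on the `a1`-cycle, while `a1` moves one step, so it always changes `φ`. -/

def inverseModel (p : Ob × Ob) : Ac :=
  if p.2 = xf then a2 else if p.1 = p.2 then a0 else a1

lemma phi_ne_xf {s : St} (hs : s ≠ sf) : phi s ≠ xf := by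
  cases s <;> simp_all [phi]

lemma phi_tr_a0 (s : St) : phi (tr s a0) = phi s := by
  cases s <;> rfl

lemma phi_tr_a1_ne {s : St} (hs : s ≠ sf) : phi (tr s a1) ≠ phi s := by
  cases s <;> simp_all [phi, tr]

lemma phi_tr_a1_ne_xf {s : St} (hs : s ≠ sf) : phi (tr s a1) ≠ xf := by
  cases s <;> simp_all [phi, tr]

lemma phi_tr_a2 (s : St) : phi (tr s a2) = xf := by
  cases s <;> rfl

/-- A one-step inverse model built on the collapsing representation achieves zero loss:
there exists `g : Ob × Ob → Ac` such that for every non-terminal state `s` and every action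
`a`, `g (φ s, φ (δ s a)) = a`. -/
theorem one_step_inverse_model_zero_loss :
    ∃ g : Ob × Ob → Ac, ∀ s : St, s ≠ sf → ∀ a : Ac,
      g (phi s, phi (tr s a)) = a := by
  refine ⟨inverseModel, fun s hs a => ?_⟩
  cases a
  · simp [inverseModel, phi_tr_a0, phi_ne_xf hs]
  · simp [inverseModel, phi_tr_a1_ne_xf hs, (phi_tr_a1_ne hs).symm]
  · simp [inverseModel, phi_tr_a2]
end

section
/- A two-step inverse model rules out collapsing s0 and s2: for every type X' and every function φ' : S → X' with φ'(s0) = φ'(s2), there is no function g : X' × X' → A such that g(φ'(s), φ'(δ(δ(s,a), a'))) = a for all s ∈ {s0, s1, s2, s3} and all a, a' ∈ A with δ(s,a) ≠ sf. (The two-step segments s0 →a0 s0 →a0 s0 and s0 →a1 s1 →a1 s2 have the same representation pair but different first actions a0 ≠ a1.) -/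
open St Ac

/-- A two-step inverse model rules out collapsing `s0` and `s2`: for every type `X'` and every
representation `φ' : St → X'` with `φ' s0 = φ' s2`, there is no `g : X' × X' → Ac` such that
`g (φ' s, φ' (δ (δ s a) a')) = a` for all non-terminal `s` and all actions `a, a'` with
`δ s a ≠ sf`. -/
theorem two_step_inverse_model_rules_out_collapse
    (X' : Type*) (phi' : St → X') (hcollapse : phi' s0 = phi' s2) :
    ¬ ∃ g : X' × X' → Ac, ∀ (s : St) (a a' : Ac),
        s ≠ sf → tr s a ≠ sf → g (phi' s, phi' (tr (tr s a) a')) = a := by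
  rintro ⟨g, hg⟩
  have stay : g (phi' s0, phi' s0) = a0 := hg s0 a0 a0 (by decide) (by decide)
  have advance : g (phi' s0, phi' s2) = a1 := hg s0 a1 a1 (by decide) (by decide)
  rw [← hcollapse, stay] at advance
  exact absurd advance (by decide)
end
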